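/- arXiv:2602.22358 — 2 statements merged into one kernel-verified Lean document; each statement's English description precedes it below -/
import Mathlib

section
/- Assume the MESS shrinking rule hypotheses, and let φ_{km} ∈ (ℓ_{k-1}(α), r_{k-1}(α)] be an angle sampled at step k. Then for all i with 1 ≤ i ≤ k−1 and all j: φ_{ij} < α if and only if φ_{ij} < φ_{km}, and φ_{ij} ≥ α if and only if φ_{ij} ≥ φ_{km}. -/
/-!
Each step of the shrinking rule moves the left endpoint up to the largest sample below `α` and
the right endpoint down to the smallest sample at or above `α`. Since the endpoints are monotone,
every earlier sample below `α` lies at or left of `ℓ (k - 1)` and every earlier sample at or above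
`α` lies at or right of `r (k - 1)`, so any point of `(ℓ (k - 1), r (k - 1)]` splits the earlier
samples exactly as `α` does.
-/

open Finset

lemma monotoneOn_Iic_of_le_succ {β : Type*} [Preorder β] {f : ℕ → β} {n : ℕ}
    (hf : ∀ m < n, f m ≤ f (m + 1)) : MonotoneOn f (Set.Iic n) :=
  monotoneOn_of_le_succ Set.ordConnected_Iic fun m _ _ hm =>
    hf m (Order.succ_le_iff.1 hm)

lemma antitoneOn_Iic_of_succ_le {β : Type*} [Preorder β] {f : ℕ → β} {n : ℕ}
    (hf : ∀ m < n, f (m + 1) ≤ f m) : AntitoneOn f (Set.Iic n) :=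
  monotoneOn_Iic_of_le_succ (β := βᵒᵈ) hf

section InsertImageFilter

variable {ι β : Type*} [LinearOrder β] {s : Finset ι} {p : ι → Prop} [DecidablePred p]

lemma le_max'_insert_image_filter (f : ι → β) (a : β) {j : ι} (hj : j ∈ s) (hp : p j) :
    f j ≤ (insert a ((s.filter p).image f)).max' (insert_nonempty _ _) :=
  le_max' _ _ (mem_insert_of_mem (mem_image_of_mem f (mem_filter.2 ⟨hj, hp⟩)))

lemma min'_insert_image_filter_le (f : ι → β) (a : β) {j : ι} (hj : j ∈ s) (hp : p j) :
    (insert a ((s.filter p).image f)).min' (insert_nonempty _ _) ≤ f j :=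
  min'_le _ _ (mem_insert_of_mem (mem_image_of_mem f (mem_filter.2 ⟨hj, hp⟩)))

end InsertImageFilter

lemma lt_iff_lt_and_le_iff_le_of_mem_Ioc {β : Type*} [LinearOrder β] {x a y L R : β}
    (hL : x < a → x ≤ L) (hR : a ≤ x → R ≤ x) (hy : y ∈ Set.Ioc L R) :
    (x < a ↔ x < y) ∧ (a ≤ x ↔ y ≤ x) := by
  have hlt : x < a ↔ x < y :=
    ⟨fun h => (hL h).trans_lt hy.1, fun h => not_le.1 fun h' => (hy.2.trans (hR h')).not_gt h⟩
  exact ⟨hlt, by simpa only [not_lt] using hlt.not⟩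

open Finset in
theorem stmt_2_general (M k : ℕ) (α : ℝ)
    (ℓ r : ℕ → ℝ) (φ : ℕ → Fin M → ℝ) (φkm : ℝ)
    (hℓ : ∀ i < k - 1, ℓ (i + 1) =
      (insert (ℓ i) (((univ : Finset (Fin M)).filter fun j => φ i j < α).image (φ i))).max'
        (insert_nonempty _ _))
    (hr : ∀ i < k - 1, r (i + 1) =
      (insert (r i) (((univ : Finset (Fin M)).filter fun j => α ≤ φ i j).image (φ i))).min'
        (insert_nonempty _ _))
    (hkm : φkm ∈ Set.Ioc (ℓ (k - 1)) (r (k - 1))) :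
    ∀ i < k - 1, ∀ j, (φ i j < α ↔ φ i j < φkm) ∧ (α ≤ φ i j ↔ φkm ≤ φ i j) := by
  have hℓ_mono : MonotoneOn ℓ (Set.Iic (k - 1)) :=
    monotoneOn_Iic_of_le_succ fun m hm => (hℓ m hm).symm ▸ le_max' _ _ (mem_insert_self _ _)
  have hr_anti : AntitoneOn r (Set.Iic (k - 1)) :=
    antitoneOn_Iic_of_succ_le fun m hm => (hr m hm).symm ▸ min'_le _ _ (mem_insert_self _ _)
  intro i hi j
  refine lt_iff_lt_and_le_iff_le_of_mem_Ioc (fun h => ?_) (fun h => ?_) hkm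
  · calc φ i j ≤ ℓ (i + 1) := (hℓ i hi).symm ▸ le_max'_insert_image_filter _ _ (mem_univ j) h
      _ ≤ ℓ (k - 1) := hℓ_mono hi Set.self_mem_Iic hi
  · calc r (k - 1) ≤ r (i + 1) := hr_anti hi Set.self_mem_Iic hi
      _ ≤ φ i j := (hr i hi).symm ▸ min'_insert_image_filter_le _ _ (mem_univ j) h

open Finset in
theorem stmt_2 (M k : ℕ) (α : ℝ) (hα : α ∈ Set.Ioc 0 (2 * Real.pi))
    (ℓ r : ℕ → ℝ) (φ : ℕ → Fin M → ℝ) (φkm : ℝ)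
    (hℓ0 : ℓ 0 = 0) (hr0 : r 0 = 2 * Real.pi)
    (hmem : ∀ i < k - 1, ∀ j, φ i j ∈ Set.Ioc (ℓ i) (r i))
    (hℓ : ∀ i < k - 1, ℓ (i + 1) =
      (insert (ℓ i) (((univ : Finset (Fin M)).filter fun j => φ i j < α).image (φ i))).max'
        (insert_nonempty _ _))
    (hr : ∀ i < k - 1, r (i + 1) =
      (insert (r i) (((univ : Finset (Fin M)).filter fun j => α ≤ φ i j).image (φ i))).min'
        (insert_nonempty _ _))
    (hkm : φkm ∈ Set.Ioc (ℓ (k - 1)) (r (k - 1))) :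
    ∀ i < k - 1, ∀ j, (φ i j < α ↔ φ i j < φkm) ∧ (α ≤ φ i j ↔ φkm ≤ φ i j) :=
  stmt_2_general M k α ℓ r φ φkm hℓ hr hkm
end

section
/- Assume the MESS shrinking rule hypotheses and let φ_{km} ∈ (ℓ_{k-1}(α), r_{k-1}(α)]. Then the brackets are invariant under swapping the roles of α and φ_{km}: for all 0 ≤ i ≤ k−1, ℓ_i(α, φ_{1:i}) = ℓ_i(φ_{km}, φ_{1:i}) and r_i(α, φ_{1:i}) = r_i(φ_{km}, φ_{1:i}), where ℓ_i(β, φ_{1:i}) denotes the interval endpoints computed with reference angle β instead of α. -/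
/-!
Every angle `φ i j` of an earlier step was sorted by `α` into either the lower or the upper
part, so it lies at or below `ℓα (k - 1)` or at or above `rα (k - 1)`, since the brackets only
shrink. Any `φkm ∈ (ℓα (k - 1), rα (k - 1)]` therefore sorts all these angles in exactly the same
way as `α`, and the two bracket sequences agree step by step.
-/

open Finset

section Shrink

variable {ι R : Type*} [Fintype ι] [LinearOrder R]

/-- `ℓ_i(β)` computed from `ℓ = ℓ_{i-1}(β)` and the angles `φ = φ_{i·}`. -/
def shrinkLower (ℓ : R) (φ : ι → R) (β : R) : R :=
  (insert ℓ (((univ : Finset ι).filter fun j => φ j < β).image φ)).max' (insert_nonempty _ _)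

/-- `r_i(β)` computed from `r = r_{i-1}(β)` and the angles `φ = φ_{i·}`. -/
def shrinkUpper (r : R) (φ : ι → R) (β : R) : R :=
  (insert r (((univ : Finset ι).filter fun j => β ≤ φ j).image φ)).min' (insert_nonempty _ _)

theorem le_shrinkLower (ℓ : R) (φ : ι → R) (β : R) : ℓ ≤ shrinkLower ℓ φ β :=
  le_max' _ _ (mem_insert_self _ _)

theorem shrinkUpper_le (r : R) (φ : ι → R) (β : R) : shrinkUpper r φ β ≤ r :=
  min'_le _ _ (mem_insert_self _ _)

theorem le_shrinkLower_of_lt (ℓ : R) {φ : ι → R} {β : R} {j : ι} (hj : φ j < β) :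
    φ j ≤ shrinkLower ℓ φ β :=
  le_max' _ _ (mem_insert_of_mem (mem_image_of_mem _ (by simpa using hj)))

theorem shrinkUpper_le_of_le (r : R) {φ : ι → R} {β : R} {j : ι} (hj : β ≤ φ j) :
    shrinkUpper r φ β ≤ φ j :=
  min'_le _ _ (mem_insert_of_mem (mem_image_of_mem _ (by simpa using hj)))

theorem shrinkLower_congr (ℓ : R) {φ : ι → R} {β γ : R} (h : ∀ j, φ j < β ↔ φ j < γ) :
    shrinkLower ℓ φ β = shrinkLower ℓ φ γ := by
  simp only [shrinkLower, h]

theorem shrinkUpper_congr (r : R) {φ : ι → R} {β γ : R} (h : ∀ j, φ j < β ↔ φ j < γ) :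
    shrinkUpper r φ β = shrinkUpper r φ γ := by
  simp only [shrinkUpper, ← not_lt, h]

end Shrink

theorem le_of_forall_le_succ_of_le {R : Type*} [Preorder R] {f : ℕ → R} {n : ℕ}
    (h : ∀ i < n, f i ≤ f (i + 1)) {i : ℕ} (hi : i ≤ n) : f i ≤ f n := by
  induction n, hi using Nat.le_induction with
  | base => exact le_rfl
  | succ m _ ih => exact (ih fun j hj => h j (by omega)).trans (h m (by omega))

theorem le_of_forall_succ_le_of_le {R : Type*} [Preorder R] {f : ℕ → R} {n : ℕ}
    (h : ∀ i < n, f (i + 1) ≤ f i) {i : ℕ} (hi : i ≤ n) : f n ≤ f i :=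
  le_of_forall_le_succ_of_le (R := Rᵒᵈ) h hi

theorem lt_iff_lt_of_mem_Ioc {R : Type*} [LinearOrder R] {x β γ ℓ r : R}
    (hlow : x < β → x ≤ ℓ) (hup : β ≤ x → r ≤ x) (hγ : γ ∈ Set.Ioc ℓ r) :
    x < β ↔ x < γ := by
  refine ⟨fun hx => (hlow hx).trans_lt hγ.1, fun hx => ?_⟩
  by_contra! hβx
  exact (hγ.2.trans (hup hβx)).not_gt hx

open Finset in
theorem stmt_3_general (M k : ℕ) (α : ℝ)
    (ℓα rα ℓβ rβ : ℕ → ℝ) (φ : ℕ → Fin M → ℝ) (φkm : ℝ)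
    (hℓα0 : ℓα 0 = 0) (hrα0 : rα 0 = 2 * Real.pi)
    (hℓβ0 : ℓβ 0 = 0) (hrβ0 : rβ 0 = 2 * Real.pi)
    (hℓα : ∀ i < k - 1, ℓα (i + 1) =
      (insert (ℓα i) (((univ : Finset (Fin M)).filter fun j => φ i j < α).image (φ i))).max'
        (insert_nonempty _ _))
    (hrα : ∀ i < k - 1, rα (i + 1) =
      (insert (rα i) (((univ : Finset (Fin M)).filter fun j => α ≤ φ i j).image (φ i))).min'
        (insert_nonempty _ _))
    (hℓβ : ∀ i < k - 1, ℓβ (i + 1) =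
      (insert (ℓβ i) (((univ : Finset (Fin M)).filter fun j => φ i j < φkm).image (φ i))).max'
        (insert_nonempty _ _))
    (hrβ : ∀ i < k - 1, rβ (i + 1) =
      (insert (rβ i) (((univ : Finset (Fin M)).filter fun j => φkm ≤ φ i j).image (φ i))).min'
        (insert_nonempty _ _))
    (hkm : φkm ∈ Set.Ioc (ℓα (k - 1)) (rα (k - 1))) :
    ∀ i ≤ k - 1, ℓα i = ℓβ i ∧ rα i = rβ i := by
  have hℓα' : ∀ i < k - 1, ℓα (i + 1) = shrinkLower (ℓα i) (φ i) α := hℓα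
  have hrα' : ∀ i < k - 1, rα (i + 1) = shrinkUpper (rα i) (φ i) α := hrα
  have hℓβ' : ∀ i < k - 1, ℓβ (i + 1) = shrinkLower (ℓβ i) (φ i) φkm := hℓβ
  have hrβ' : ∀ i < k - 1, rβ (i + 1) = shrinkUpper (rβ i) (φ i) φkm := hrβ
  have hℓα_le : ∀ i ≤ k - 1, ℓα i ≤ ℓα (k - 1) := fun _ =>
    le_of_forall_le_succ_of_le fun n hn => hℓα' n hn ▸ le_shrinkLower _ _ _
  have hrα_ge : ∀ i ≤ k - 1, rα (k - 1) ≤ rα i := fun _ =>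
    le_of_forall_succ_le_of_le fun n hn => hrα' n hn ▸ shrinkUpper_le _ _ _
  have hsorted : ∀ i < k - 1, ∀ j, φ i j < α ↔ φ i j < φkm := fun i hi j =>
    lt_iff_lt_of_mem_Ioc
      (fun hj => (hℓα' i hi ▸ le_shrinkLower_of_lt _ hj).trans (hℓα_le _ hi))
      (fun hj => (hrα_ge _ hi).trans (hrα' i hi ▸ shrinkUpper_le_of_le _ hj))
      hkm
  intro i hi
  induction i with
  | zero => exact ⟨hℓα0.trans hℓβ0.symm, hrα0.trans hrβ0.symm⟩
  | succ i ih =>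
    have hik : i < k - 1 := by omega
    obtain ⟨hℓ, hr⟩ := ih hik.le
    exact ⟨by rw [hℓα' i hik, hℓβ' i hik, hℓ, shrinkLower_congr _ (hsorted i hik)],
      by rw [hrα' i hik, hrβ' i hik, hr, shrinkUpper_congr _ (hsorted i hik)]⟩

open Finset in
theorem stmt_3 (M k : ℕ) (α : ℝ) (hα : α ∈ Set.Ioc 0 (2 * Real.pi))
    (ℓα rα ℓβ rβ : ℕ → ℝ) (φ : ℕ → Fin M → ℝ) (φkm : ℝ)
    (hℓα0 : ℓα 0 = 0) (hrα0 : rα 0 = 2 * Real.pi)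
    (hℓβ0 : ℓβ 0 = 0) (hrβ0 : rβ 0 = 2 * Real.pi)
    (hmem : ∀ i < k - 1, ∀ j, φ i j ∈ Set.Ioc (ℓα i) (rα i))
    (hℓα : ∀ i < k - 1, ℓα (i + 1) =
      (insert (ℓα i) (((univ : Finset (Fin M)).filter fun j => φ i j < α).image (φ i))).max'
        (insert_nonempty _ _))
    (hrα : ∀ i < k - 1, rα (i + 1) =
      (insert (rα i) (((univ : Finset (Fin M)).filter fun j => α ≤ φ i j).image (φ i))).min'
        (insert_nonempty _ _))
    (hℓβ : ∀ i < k - 1, ℓβ (i + 1) =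
      (insert (ℓβ i) (((univ : Finset (Fin M)).filter fun j => φ i j < φkm).image (φ i))).max'
        (insert_nonempty _ _))
    (hrβ : ∀ i < k - 1, rβ (i + 1) =
      (insert (rβ i) (((univ : Finset (Fin M)).filter fun j => φkm ≤ φ i j).image (φ i))).min'
        (insert_nonempty _ _))
    (hkm : φkm ∈ Set.Ioc (ℓα (k - 1)) (rα (k - 1))) :
    ∀ i ≤ k - 1, ℓα i = ℓβ i ∧ rα i = rβ i :=
  stmt_3_general M k α ℓα rα ℓβ rβ φ φkm hℓα0 hrα0 hℓβ0 hrβ0 hℓα hrα hℓβ hrβ hkm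
end
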